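/- arXiv:math/0401349 — 3 statements merged into one kernel-verified Lean document; each statement's English description precedes it below -/
import Mathlib

section
/- Let Δ ∈ F be cyclically reduced and let V ∈ F satisfy ‖V‖ ≤ ‖Δ⁻¹ * V * Δ‖ and ‖V‖ ≤ ‖Δ * V * Δ⁻¹‖. Then V is Δ-reduced, i.e. ‖V‖ ≤ ‖Δ^(−k) * V * Δ^k‖ for every integer k. -/
/-!
If `Δ` has minimal length in its conjugacy class, its reduced word is cyclically reduced: its last
letter does not cancel against its first. Hence for every `x`, one of `Δ * x`, `Δ⁻¹ * x` involves
no cancellation, and likewise on the right, so some `Δ^{±1} W Δ^{±1}` has length `‖W‖ + 2‖Δ‖`.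
By the triangle inequality each of these four elements `y` satisfies
`2‖y‖ ≤ ‖Δ⁻¹ W Δ‖ + ‖Δ W Δ⁻¹‖ + 4‖Δ‖`, whence `2‖W‖ ≤ ‖Δ⁻¹ W Δ‖ + ‖Δ W Δ⁻¹‖`. So
`k ↦ ‖Δ^(-k) V Δ^k‖` is convex on `ℤ`, and it does not decrease at its first steps away from `0`.
-/

open FreeGroup

namespace FreeGroup

variable {α : Type*}

theorem getLast?_invRev (L : List (α × Bool)) :
    (invRev L).getLast? = L.head?.map fun a => (a.1, !a.2) := by
  simp [invRev, List.getLast?_reverse, List.head?_map]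

variable [DecidableEq α]

theorem isCyclicallyReduced_toWord_of_forall_norm_le_norm_conj {Δ : FreeGroup α}
    (hΔ : ∀ g : FreeGroup α, Δ.norm ≤ (g⁻¹ * Δ * g).norm) : IsCyclicallyReduced Δ.toWord := by
  set c := reduceCyclically.conjugator Δ.toWord
  set r := reduceCyclically Δ.toWord
  have hdecomp : c ++ r ++ invRev c = Δ.toWord :=
    reduceCyclically.conj_conjugator_reduceCyclically _
  have hconj : (mk c)⁻¹ * Δ * mk c = mk r := by
    rw [← mk_toWord (x := Δ), ← hdecomp, ← mul_mk, ← mul_mk, ← inv_mk]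
    group
  have hlen := congrArg List.length hdecomp
  have hle := (hΔ (mk c)).trans_eq (congrArg norm hconj) |>.trans norm_mk_le
  simp only [List.length_append, invRev_length] at hlen
  have hc : c = [] := List.eq_nil_of_length_eq_zero (by rw [norm] at hle; omega)
  simp only [hc, List.nil_append, invRev, List.map_nil, List.reverse_nil, List.append_nil] at hdecomp
  exact hdecomp ▸ reduceCyclically.isCyclicallyReduced isReduced_toWord

theorem isReduced_toWord_append_or_isReduced_toWord_inv_append {Δ : FreeGroup α}
    (hΔ : IsCyclicallyReduced Δ.toWord) (x : FreeGroup α) :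
    IsReduced (Δ.toWord ++ x.toWord) ∨ IsReduced (Δ⁻¹.toWord ++ x.toWord) := by
  rcases hx : x.toWord.head? with _ | c
  · exact .inl <| .append isReduced_toWord isReduced_toWord (by simp [hx])
  by_cases hc : ∀ a ∈ Δ.toWord.getLast?, a.1 = c.1 → a.2 = c.2
  · exact .inl <| .append isReduced_toWord isReduced_toWord (by simpa [hx] using hc)
  push Not at hc
  obtain ⟨a, ha, hac₁, hac₂⟩ := hc
  refine .inr <| .append isReduced_toWord isReduced_toWord ?_
  simp only [toWord_inv, getLast?_invRev, hx, Option.mem_map, Option.mem_some_iff]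
  rintro _ ⟨b, hb, rfl⟩ _ rfl hbc
  have := hΔ.2 a ha b hb (hac₁.trans hbc.symm)
  grind

theorem norm_mul_eq_of_isReduced {x y : FreeGroup α} (h : IsReduced (x.toWord ++ y.toWord)) :
    (x * y).norm = x.norm + y.norm := by
  rw [norm, toWord_mul, h.reduce_eq, List.length_append, norm, norm]

theorem norm_mul_eq_or_norm_inv_mul_eq {Δ : FreeGroup α} (hΔ : IsCyclicallyReduced Δ.toWord)
    (x : FreeGroup α) :
    (Δ * x).norm = Δ.norm + x.norm ∨ (Δ⁻¹ * x).norm = Δ.norm + x.norm :=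
  (isReduced_toWord_append_or_isReduced_toWord_inv_append hΔ x).imp norm_mul_eq_of_isReduced
    fun h => by rw [norm_mul_eq_of_isReduced h, norm_inv_eq]

theorem norm_mul_eq_or_norm_mul_inv_eq {Δ : FreeGroup α} (hΔ : IsCyclicallyReduced Δ.toWord)
    (x : FreeGroup α) :
    (x * Δ).norm = x.norm + Δ.norm ∨ (x * Δ⁻¹).norm = x.norm + Δ.norm := by
  rw [← norm_inv_eq (x := x * Δ), ← norm_inv_eq (x := x * Δ⁻¹), mul_inv_rev, mul_inv_rev,
    inv_inv, add_comm, ← norm_inv_eq (x := x)]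
  exact (norm_mul_eq_or_norm_inv_mul_eq hΔ x⁻¹).symm

theorem norm_mul_mul_le (x y z : FreeGroup α) : (x * y * z).norm ≤ x.norm + y.norm + z.norm :=
  (norm_mul_le _ _).trans (Nat.add_le_add_right (norm_mul_le _ _) _)

theorem two_mul_norm_le_norm_conj_add_norm_conj {Δ : FreeGroup α}
    (hΔ : IsCyclicallyReduced Δ.toWord) (W : FreeGroup α) :
    2 * W.norm ≤ (Δ⁻¹ * W * Δ).norm + (Δ * W * Δ⁻¹).norm := by
  have hsq := norm_mul_le Δ Δ
  have hsq' := norm_mul_le Δ⁻¹ Δ⁻¹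
  rw [norm_inv_eq] at hsq'
  have hab := norm_mul_mul_le (Δ⁻¹ * Δ⁻¹) (Δ * W * Δ⁻¹) (Δ * Δ)
  have hba := norm_mul_mul_le (Δ * Δ) (Δ⁻¹ * W * Δ) (Δ⁻¹ * Δ⁻¹)
  rw [show Δ⁻¹ * Δ⁻¹ * (Δ * W * Δ⁻¹) * (Δ * Δ) = Δ⁻¹ * W * Δ by group] at hab
  rw [show Δ * Δ * (Δ⁻¹ * W * Δ) * (Δ⁻¹ * Δ⁻¹) = Δ * W * Δ⁻¹ by group] at hba
  rcases norm_mul_eq_or_norm_inv_mul_eq hΔ W with hl | hl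
  · rcases norm_mul_eq_or_norm_mul_inv_eq hΔ (Δ * W) with hr | hr
    · have h₁ := norm_mul_le (Δ * Δ) (Δ⁻¹ * W * Δ)
      have h₂ := norm_mul_le (Δ * W * Δ⁻¹) (Δ * Δ)
      rw [show Δ * Δ * (Δ⁻¹ * W * Δ) = Δ * W * Δ by group] at h₁
      rw [show Δ * W * Δ⁻¹ * (Δ * Δ) = Δ * W * Δ by group] at h₂
      omega
    · omega
  · rcases norm_mul_eq_or_norm_mul_inv_eq hΔ (Δ⁻¹ * W) with hr | hr
    · omega
    · have h₁ := norm_mul_le (Δ⁻¹ * Δ⁻¹) (Δ * W * Δ⁻¹)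
      have h₂ := norm_mul_le (Δ⁻¹ * W * Δ) (Δ⁻¹ * Δ⁻¹)
      rw [show Δ⁻¹ * Δ⁻¹ * (Δ * W * Δ⁻¹) = Δ⁻¹ * W * Δ⁻¹ by group] at h₁
      rw [show Δ⁻¹ * W * Δ * (Δ⁻¹ * Δ⁻¹) = Δ⁻¹ * W * Δ⁻¹ by group] at h₂
      omega

end FreeGroup

section DiscreteConvexity

variable {β : Type*} [AddCommMonoid β] [PartialOrder β] [IsOrderedCancelAddMonoid β]
  {f : ℤ → β}

theorem monotone_natCast_of_add_le_add (hf : ∀ k, f k + f k ≤ f (k + 1) + f (k - 1))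
    (h₁ : f 0 ≤ f 1) : Monotone fun n : ℕ => f n := by
  refine monotone_nat_of_le_succ fun n => ?_
  induction n with
  | zero => simpa using h₁
  | succ n ih =>
    have h := hf (n + 1)
    push_cast at ih ⊢
    rw [add_sub_cancel_right] at h
    exact le_of_add_le_add_right (h.trans (add_le_add_right ih _))

theorem apply_zero_le_of_add_le_add (hf : ∀ k, f k + f k ≤ f (k + 1) + f (k - 1))
    (h₁ : f 0 ≤ f 1) (hneg : f 0 ≤ f (-1)) (k : ℤ) : f 0 ≤ f k := by
  obtain ⟨n, rfl | rfl⟩ := k.eq_nat_or_neg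
  · exact monotone_natCast_of_add_le_add hf h₁ (Nat.zero_le n)
  · have hf' : ∀ k, f (-k) + f (-k) ≤ f (-(k + 1)) + f (-(k - 1)) := fun k => by
      rw [neg_add', neg_sub', sub_neg_eq_add, add_comm (f (-k - 1))]
      exact hf (-k)
    simpa using monotone_natCast_of_add_le_add (f := fun k => f (-k)) hf' (by simpa using hneg)
      (Nat.zero_le n)

end DiscreteConvexity

/-- **Lemma 3.** If `Δ` is cyclically reduced and
`‖V‖ ≤ ‖Δ⁻¹ V Δ‖` and `‖V‖ ≤ ‖Δ V Δ⁻¹‖`, then `V` is `Δ`-reduced: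
`‖V‖ ≤ ‖Δ^(-k) V Δ^k‖` for every integer `k`. -/
theorem delta_reduced_of_one_step_reduced
    {α : Type*} [DecidableEq α] (Δ V : FreeGroup α)
    (hΔ : ∀ g : FreeGroup α, Δ.norm ≤ (g⁻¹ * Δ * g).norm)
    (h1 : V.norm ≤ (Δ⁻¹ * V * Δ).norm)
    (h2 : V.norm ≤ (Δ * V * Δ⁻¹).norm) :
    ∀ k : ℤ, V.norm ≤ (Δ ^ (-k) * V * Δ ^ k).norm := by
  have hΔ' := isCyclicallyReduced_toWord_of_forall_norm_le_norm_conj hΔ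
  intro k
  have hconv (m : ℤ) :
      (Δ ^ (-m) * V * Δ ^ m).norm + (Δ ^ (-m) * V * Δ ^ m).norm ≤
        (Δ ^ (-(m + 1)) * V * Δ ^ (m + 1)).norm + (Δ ^ (-(m - 1)) * V * Δ ^ (m - 1)).norm := by
    have h := two_mul_norm_le_norm_conj_add_norm_conj hΔ' (Δ ^ (-m) * V * Δ ^ m)
    rw [← two_mul]
    convert h using 3 <;> group
  simpa using apply_zero_le_of_add_le_add (f := fun k : ℤ => (Δ ^ (-k) * V * Δ ^ k).norm) hconv
    (by simpa using h1) (by simpa using h2) k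
end

section
/- For any Δ, V ∈ F, the set of elements of the form Δ^(−k) * V * Δ^k (k ∈ ℤ) that are Δ-reduced is finite; that is, the set { w ∈ F | (∃ k : ℤ, w = Δ^(−k) * V * Δ^k) ∧ (∀ j : ℤ, ‖w‖ ≤ ‖Δ^(−j) * w * Δ^j‖) } is finite. -/
open FreeGroup

lemma finite_lists_aux {β : Type*} (S : List β) (n : ℕ) :
    {l : List (β × Bool) | l.length ≤ n ∧ ∀ x ∈ l, x.1 ∈ S}.Finite := by
  haveI : Finite {a // a ∈ S} := S.finite_toSet.to_subtype
  have h1 : {l : List ({a // a ∈ S} × Bool) | l.length ≤ n}.Finite :=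
    List.finite_length_le _ n
  apply (h1.image (List.map (fun p => (p.1.1, p.2)))).subset
  rintro l ⟨hlen, hmem⟩
  refine ⟨l.attach.map (fun x => (⟨x.1.1, hmem x.1 x.2⟩, x.1.2)), ?_, ?_⟩
  · simpa using hlen
  · rw [List.map_map]
    have : ((fun p : {a // a ∈ S} × Bool => (p.1.1, p.2)) ∘
        (fun x : {x // x ∈ l} => ((⟨x.1.1, hmem x.1 x.2⟩ : {a // a ∈ S}), x.1.2)))
        = fun x : {x // x ∈ l} => x.1 := by
      funext x; rfl
    rw [this]
    exact List.attach_map_subtype_val l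

lemma letters_mul {α : Type*} [DecidableEq α] {S : List α} {x y : FreeGroup α}
    (hx : ∀ p ∈ x.toWord, p.1 ∈ S) (hy : ∀ p ∈ y.toWord, p.1 ∈ S) :
    ∀ p ∈ (x * y).toWord, p.1 ∈ S := by
  intro p hp
  have := (toWord_mul_sublist x y).mem hp
  rcases List.mem_append.1 this with h | h
  · exact hx p h
  · exact hy p h

lemma letters_inv {α : Type*} [DecidableEq α] {S : List α} {x : FreeGroup α}
    (hx : ∀ p ∈ x.toWord, p.1 ∈ S) :
    ∀ p ∈ x⁻¹.toWord, p.1 ∈ S := by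
  intro p hp
  rw [toWord_inv] at hp
  unfold FreeGroup.invRev at hp
  simp only [List.mem_map, List.mem_reverse] at hp
  obtain ⟨q, hq, rfl⟩ := hp
  exact hx q hq

lemma letters_zpow {α : Type*} [DecidableEq α] {S : List α} {x : FreeGroup α}
    (hx : ∀ p ∈ x.toWord, p.1 ∈ S) (k : ℤ) :
    ∀ p ∈ (x ^ k).toWord, p.1 ∈ S := by
  have hnat : ∀ n : ℕ, ∀ p ∈ (x ^ n).toWord, p.1 ∈ S := by
    intro n
    induction n with
    | zero => intro p hp; simp [toWord_one] at hp
    | succ m ih =>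
        rw [pow_succ]
        exact letters_mul ih hx
  rcases k with n | n
  · simpa using hnat n
  · rw [zpow_negSucc]
    exact letters_inv (hnat _)

/-- For any `Δ, V` in a free group, the set of `Δ`-reduced elements
among the conjugates `Δ^(-k) V Δ^k` (`k ∈ ℤ`) is finite. -/
theorem finite_delta_reduced_conjugates
    {α : Type*} [DecidableEq α] (Δ V : FreeGroup α) :
    Set.Finite {w : FreeGroup α |
      (∃ k : ℤ, w = Δ ^ (-k) * V * Δ ^ k) ∧
      (∀ j : ℤ, w.norm ≤ (Δ ^ (-j) * w * Δ ^ j).norm)} := by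
  set S : List α := (Δ.toWord ++ V.toWord).map Prod.fst with hS
  apply Set.Finite.of_finite_image (f := toWord)
  · apply (finite_lists_aux S V.norm).subset
    rintro l ⟨w, ⟨⟨⟨k, rfl⟩, hred⟩, rfl⟩⟩
    constructor
    · have := hred (-k)
      have heq : Δ ^ (-(-k)) * (Δ ^ (-k) * V * Δ ^ k) * Δ ^ (-k) = V := by
        group
      rw [heq] at this
      exact this
    · have hΔ : ∀ p ∈ Δ.toWord, p.1 ∈ S := by
        intro p hp; rw [hS]; simp only [List.mem_map, List.mem_append]
        exact ⟨p, Or.inl hp, rfl⟩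
      have hV : ∀ p ∈ V.toWord, p.1 ∈ S := by
        intro p hp; rw [hS]; simp only [List.mem_map, List.mem_append]
        exact ⟨p, Or.inr hp, rfl⟩
      exact letters_mul (letters_mul (letters_zpow hΔ (-k)) hV) (letters_zpow hΔ k)
  · exact fun a _ b _ h => toWord_injective h
end

section
/- Let U, W, Σ ∈ F be nontrivial elements and k an integer with k > 1, and set Δ := U⁻¹ * W⁻¹ * Σ * W * U and V := U⁻¹ * W⁻¹ * Σ^k * W * U^2. Assume both expressions are norm-additive, i.e. ‖Δ‖ = 2‖U‖ + 2‖W‖ + ‖Σ‖ and ‖V‖ = 3‖U‖ + 2‖W‖ + k‖Σ‖. Then for every integer j with 1 ≤ j ≤ k − 1 one has the group identity Δ^(−j) * V * Δ^j = U⁻¹ * W⁻¹ * Σ^(k−j) * W * U * W⁻¹ * Σ^j * W * U, one has Δ^(−k) * V * Δ^k = W⁻¹ * Σ^k * W * U, and ‖Δ^(−k) * V * Δ^k‖ < ‖V‖. -/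
open FreeGroup

private lemma my_norm_pow_le {α : Type*} [DecidableEq α] (S : FreeGroup α) :
    ∀ n : ℕ, (S ^ n).norm ≤ n * S.norm := by
  intro n
  induction n with
  | zero => simp
  | succ n ih =>
      calc (S ^ (n + 1)).norm = (S ^ n * S).norm := by rw [pow_succ]
        _ ≤ (S ^ n).norm + S.norm := norm_mul_le _ _
        _ ≤ n * S.norm + S.norm := by omega
        _ = (n + 1) * S.norm := by ring

private lemma zpow_conj {G : Type*} [Group G] (a b : G) (n : ℤ) :
    (a * b * a⁻¹) ^ n = a * b ^ n * a⁻¹ := by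
  rw [← conj_zpow]

/-- **Example after Lemma 3.** With `Δ = U⁻¹ W⁻¹ Σ W U` and
`V = U⁻¹ W⁻¹ Σ^k W U²`, both reduced as written, the conjugates `Δ^(-j) V Δ^j`
for `1 ≤ j ≤ k-1` have the displayed form, and `Δ^(-k) V Δ^k = W⁻¹ Σ^k W U`,
which is strictly shorter than `V`. -/
theorem example_delta_not_cyclically_reduced
    {α : Type*} [DecidableEq α] (U W S : FreeGroup α)
    (hU : U ≠ 1) (hW : W ≠ 1) (hS : S ≠ 1) (k : ℤ) (hk : 1 < k)
    (Δ V : FreeGroup α)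
    (hΔdef : Δ = U⁻¹ * W⁻¹ * S * W * U)
    (hVdef : V = U⁻¹ * W⁻¹ * S ^ k * W * U ^ 2)
    (hΔnorm : Δ.norm = 2 * U.norm + 2 * W.norm + S.norm)
    (hVnorm : (V.norm : ℤ) = 3 * U.norm + 2 * W.norm + k * S.norm) :
    (∀ j : ℤ, 1 ≤ j → j ≤ k - 1 →
      Δ ^ (-j) * V * Δ ^ j =
        U⁻¹ * W⁻¹ * S ^ (k - j) * W * U * W⁻¹ * S ^ j * W * U) ∧
    Δ ^ (-k) * V * Δ ^ k = W⁻¹ * S ^ k * W * U ∧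
    (Δ ^ (-k) * V * Δ ^ k).norm < V.norm := by
  have hΔpow : ∀ n : ℤ, Δ ^ n = (U⁻¹ * W⁻¹) * S ^ n * (U⁻¹ * W⁻¹)⁻¹ := by
    intro n
    have : Δ = (U⁻¹ * W⁻¹) * S * (U⁻¹ * W⁻¹)⁻¹ := by rw [hΔdef]; group
    rw [this, zpow_conj]
  have key : ∀ j : ℤ, Δ ^ (-j) * V * Δ ^ j =
      U⁻¹ * W⁻¹ * S ^ (k - j) * W * U * W⁻¹ * S ^ j * W * U := by
    intro j
    rw [hΔpow, hΔpow, hVdef]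
    have hsplit : S ^ k = S ^ (k - j) * S ^ j := by
      rw [← zpow_add]; ring_nf
    rw [hsplit]
    group
  have hkey_k : Δ ^ (-k) * V * Δ ^ k = W⁻¹ * S ^ k * W * U := by
    rw [key k]
    simp only [sub_self, zpow_zero]
    group
  refine ⟨fun j _ _ => key j, hkey_k, ?_⟩
  rw [hkey_k]
  have hSk : (S ^ k).norm ≤ k.toNat * S.norm := by
    have : S ^ k = S ^ (k.toNat) := by
      rw [← zpow_natCast]
      congr 1
      omega
    rw [this]
    exact my_norm_pow_le S k.toNat
  have hUpos : 0 < U.norm := by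
    rcases Nat.eq_zero_or_pos U.norm with h | h
    · exact absurd (norm_eq_zero.mp h) hU
    · exact h
  have h1 : (W⁻¹ * S ^ k * W * U).norm ≤ W.norm + (S ^ k).norm + W.norm + U.norm := by
    calc (W⁻¹ * S ^ k * W * U).norm ≤ (W⁻¹ * S ^ k * W).norm + U.norm := norm_mul_le _ _
      _ ≤ (W⁻¹ * S ^ k).norm + W.norm + U.norm := by
          have := norm_mul_le (W⁻¹ * S ^ k) W; omega
      _ ≤ W⁻¹.norm + (S ^ k).norm + W.norm + U.norm := by
          have := norm_mul_le W⁻¹ (S ^ k); omega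
      _ = W.norm + (S ^ k).norm + W.norm + U.norm := by rw [norm_inv_eq]
  have hcast : (k.toNat : ℤ) = k := by omega
  have : ((W⁻¹ * S ^ k * W * U).norm : ℤ) ≤ 2 * W.norm + k * S.norm + U.norm := by
    have h2 : ((W⁻¹ * S ^ k * W * U).norm : ℤ) ≤
        (W.norm : ℤ) + (S ^ k).norm + W.norm + U.norm := by exact_mod_cast h1
    have h3 : ((S ^ k).norm : ℤ) ≤ k * S.norm := by
      calc ((S ^ k).norm : ℤ) ≤ (k.toNat : ℤ) * S.norm := by exact_mod_cast hSk
        _ = k * S.norm := by rw [hcast]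
    linarith
  have : ((W⁻¹ * S ^ k * W * U).norm : ℤ) < V.norm := by
    rw [hVnorm]
    have : (0:ℤ) < U.norm := by exact_mod_cast hUpos
    linarith
  exact_mod_cast this
end
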